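/- arXiv:2506.04935 — 4 statements merged into one kernel-verified Lean document; each statement's English description precedes it below -/
import Mathlib

section
/- Let T and T' be strings over Σ ∪ {#} with # ∉ Σ and |Σ| ≥ 3, such that d_H(T,T') = 1, T[i] ≠ T'[i] = # for some position i, the number of occurrences of a periodic string P of length m in T exceeds that in T' by some y > 0, and # occurs exactly once in T'[i−m+1..i+m−1]. Then T'[i] can be substituted by a letter from Σ yielding a string T'' in which the number of occurrences of P is at most that in T'. -/
open Classical

/-- `p` is a period of the string (list) `P`. -/
def IsPeriodOf {α : Type*} (P : List α) (p : ℕ) : Prop :=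
  0 < p ∧ ∀ i, i + p < P.length → P[i]? = P[i + p]?

/-- The smallest period of `P`. -/
noncomputable def minPeriod {α : Type*} (P : List α) : ℕ := sInf {p | IsPeriodOf P p}

/-- `P` is periodic if its smallest period is at most `|P|/2`. -/
def ListPeriodic {α : Type*} (P : List α) : Prop := 2 * minPeriod P ≤ P.length

/-- `P` occurs in `S` starting at position `i`. -/
def OccursAt {α : Type*} (P S : List α) (i : ℕ) : Prop :=
  i + P.length ≤ S.length ∧ (S.drop i).take P.length = P

/-- The set of starting positions of occurrences of `P` in `S`. -/
noncomputable def occ {α : Type*} (P S : List α) : Finset ℕ :=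
  (Finset.range (S.length + 1)).filter (fun i => OccursAt P S i)

/-- Hamming distance between two (equal-length) strings. -/
noncomputable def hamming {α : Type*} (S T : List α) : ℕ :=
  ((List.range S.length).filter (fun i => S[i]? ≠ T[i]?)).length

/-- `P` is `(τ,k)`-resilient in `S`. -/
def Resilient {α : Type*} (P S : List α) (τ k : ℕ) : Prop :=
  ∀ S' : List α, S'.length = S.length → hamming S S' ≤ k → τ ≤ (occ P S').card

/-- The fragment `S[x..y]` (inclusive). -/
def frag {α : Type*} (S : List α) (x y : ℕ) : List α := (S.drop x).take (y - x + 1)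

/-- The fragment `S[x..y]` is a run of `S`. -/
def IsRun {α : Type*} (S : List α) (x y : ℕ) : Prop :=
  x ≤ y ∧ y < S.length ∧ 2 * minPeriod (frag S x y) ≤ y - x + 1 ∧
  (0 < x → ¬ IsPeriodOf (frag S (x - 1) y) (minPeriod (frag S x y))) ∧
  (y + 1 < S.length → ¬ IsPeriodOf (frag S x (y + 1)) (minPeriod (frag S x y)))

/-!
Let `p = per(P)`, so `2p ≤ |P|`. An occurrence of `P` covering position `i` also covers `i - p`
or `i + p`, and by periodicity the text agrees at `i` and at that position. Substituting at `i` a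
letter different from the letters at `i - p` and `i + p` (possible as `|Σ| ≥ 3`) therefore creates
no occurrence covering `i`, while occurrences avoiding `i` are unaffected.
-/

lemma isPeriodOf_minPeriod {α : Type*} (P : List α) : IsPeriodOf P (minPeriod P) :=
  Nat.sInf_mem (s := {p | IsPeriodOf P p}) ⟨P.length + 1, Nat.succ_pos _, fun t ht => by omega⟩

lemma mem_occ {α : Type*} {P S : List α} {j : ℕ} : j ∈ occ P S ↔ OccursAt P S j := by
  simp only [occ, Finset.mem_filter, Finset.mem_range, and_iff_right_iff_imp]
  intro h
  have := h.1
  omega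

namespace OccursAt

variable {α : Type*} {P S : List α} {j : ℕ}

lemma getElem?_add (h : OccursAt P S j) {t : ℕ} (ht : t < P.length) : S[j + t]? = P[t]? := by
  conv_rhs => rw [← h.2]
  rw [List.getElem?_take_of_lt ht, List.getElem?_drop]

lemma getElem?_eq_getElem?_add_of_isPeriodOf (h : OccursAt P S j) {p i : ℕ}
    (hp : IsPeriodOf P p) (hji : j ≤ i) (hi : i + p < j + P.length) :
    S[i]? = S[i + p]? := by
  have hshift := hp.2 (i - j) (by omega)
  rw [← h.getElem?_add (by omega), ← h.getElem?_add (by omega)] at hshift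
  rwa [show j + (i - j) = i by omega, show j + (i - j + p) = i + p by omega] at hshift

lemma exists_getElem?_eq_of_isPeriodOf (h : OccursAt P S j) {p i : ℕ}
    (hp : IsPeriodOf P p) (h2p : 2 * p ≤ P.length) (hji : j ≤ i) (hij : i < j + P.length) :
    ∃ k, (k + p = i ∨ k = i + p) ∧ S[k]? = S[i]? := by
  by_cases hright : i + p < j + P.length
  · exact ⟨i + p, Or.inr rfl, (h.getElem?_eq_getElem?_add_of_isPeriodOf hp hji hright).symm⟩
  · refine ⟨i - p, Or.inl (by omega), ?_⟩
    have := h.getElem?_eq_getElem?_add_of_isPeriodOf hp (i := i - p) (by omega) (by omega)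
    rwa [Nat.sub_add_cancel (by omega)] at this

lemma set_iff {i : ℕ} {x : α} (hi : i < j ∨ j + P.length ≤ i) :
    OccursAt P (S.set i x) j ↔ OccursAt P S j := by
  have hfrag : ((S.set i x).drop j).take P.length = (S.drop j).take P.length := by
    refine List.ext_getElem? fun n => ?_
    by_cases hn : n < P.length
    · rw [List.getElem?_take_of_lt hn, List.getElem?_take_of_lt hn, List.getElem?_drop,
        List.getElem?_drop, List.getElem?_set_ne (by omega)]
    · rw [List.getElem?_eq_none (by simp; omega), List.getElem?_eq_none (by simp; omega)]
  simp only [OccursAt, List.length_set, hfrag]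

end OccursAt

lemma occ_set_subset_of_isPeriodOf {α : Type*} {P S : List α} {p i : ℕ} {x : α}
    (hp : IsPeriodOf P p) (h2p : 2 * p ≤ P.length)
    (hx : ∀ k, (k + p = i ∨ k = i + p) → S[k]? ≠ some x) :
    occ P (S.set i x) ⊆ occ P S := by
  intro j
  simp only [mem_occ]
  intro hocc
  by_cases hcover : j ≤ i ∧ i < j + P.length
  · exfalso
    obtain ⟨k, hk, hSk⟩ := hocc.exists_getElem?_eq_of_isPeriodOf hp h2p hcover.1 hcover.2
    have hilen : i < S.length := by have := hocc.1; simp only [List.length_set] at this; omega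
    rw [List.getElem?_set_self hilen, List.getElem?_set_ne (by have := hp.1; omega)] at hSk
    exact hx k hk hSk
  · exact (OccursAt.set_iff (by omega)).1 hocc

lemma exists_ne_ne_of_injective {α β : Type*} [Fintype α] (hcard : 3 ≤ Fintype.card α)
    {f : α → β} (hf : Function.Injective f) (a b : β) : ∃ c, f c ≠ a ∧ f c ≠ b := by
  have hlt : ({a, b} : Finset β).card < (Finset.univ.image f).card := by
    rw [Finset.card_image_of_injective _ hf, Finset.card_univ]
    have := Finset.card_le_two (a := a) (b := b)
    omega
  obtain ⟨e, he, heab⟩ := Finset.exists_mem_notMem_of_card_lt_card hlt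
  obtain ⟨c, -, rfl⟩ := Finset.mem_image.1 he
  simp only [Finset.mem_insert, Finset.mem_singleton, not_or] at heab
  exact ⟨c, heab⟩

theorem stmt9_general {α : Type*} [Fintype α] (hcard : 3 ≤ Fintype.card α)
    (T' P : List (Option α)) (i : ℕ)
    (hper : ListPeriodic P) :
    ∃ c : α, (occ P (T'.set i (some c))).card ≤ (occ P T').card := by
  set p := minPeriod P
  obtain ⟨c, hc_left, hc_right⟩ := exists_ne_ne_of_injective hcard
    (Option.some_injective _ |>.comp (Option.some_injective α)) T'[i - p]? T'[i + p]?
  refine ⟨c, Finset.card_le_card (occ_set_subset_of_isPeriodOf (isPeriodOf_minPeriod P) hper ?_)⟩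
  rintro k (hk | rfl) hTk
  · exact hc_left (by rw [show i - p = k by omega, hTk]; rfl)
  · exact hc_right hTk.symm

theorem stmt9 {α : Type*} [Fintype α] [DecidableEq α] (hcard : 3 ≤ Fintype.card α)
    (T T' P : List (Option α)) (m i y : ℕ)
    (hlen : T'.length = T.length)
    (hd : hamming T T' = 1)
    (hi : i < T.length) (hne : T[i]? ≠ T'[i]?) (hsharp : T'[i]? = some none)
    (hper : ListPeriodic P) (hm : P.length = m)
    (hy : 0 < y) (hdrop : (occ P T).card = (occ P T').card + y)
    (hone : (frag T' (i - m + 1) (i + m - 1)).count none = 1) :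
    ∃ c : α, (occ P (T'.set i (some c))).card ≤ (occ P T').card :=
  stmt9_general hcard T' P i hper
end

section
/- For a string S over Σ with |Σ| ≥ 4, a substring P of S is (τ,k)-resilient with respect to modified strings over Σ if and only if it is (τ,k)-resilient with respect to modified strings over Σ ∪ {#} for a fresh letter # ∉ Σ. That is, P is τ-frequent in every S' ∈ Σ^n with d_H(S,S') ≤ k if and only if P is τ-frequent in every S'' ∈ (Σ∪{#})^n with d_H(S,S'') ≤ k. -/
open Classical

/-!
Replacing a `#` (here `none`) of `S''` by a letter of `Σ` never increases the Hamming distance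
to `S`. A letter `c` written at position `j` can only create an occurrence of `P` covering `j`
if `P` matches `S''` around `j` at all offsets but one, `o`, and `P[o] = c`. Two such offsets
`o₁ < o₂` make `o₂ - o₁` a period of `P` away from `o₁`, so three of them give `P[o₁] = P[o₃]`:
at most two letters are dangerous, and a third one removes the `#` without creating an
occurrence. Removing the `#`s one at a time turns `S''` into a string over `Σ`.
-/

open Function

section
variable {β γ : Type*}

def AlmostOccursAt (P S : List β) (i o : ℕ) : Prop :=
  i + P.length ≤ S.length ∧ ∀ t < P.length, t ≠ o → S[i + t]? = P[t]?

theorem occursAt_iff_getElem? {P S : List β} {i : ℕ} :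
    OccursAt P S i ↔ i + P.length ≤ S.length ∧ ∀ t < P.length, S[i + t]? = P[t]? := by
  refine and_congr_right fun hi => ⟨fun h t ht => ?_, fun h => List.ext_getElem? fun t => ?_⟩
  · rw [← h, List.getElem?_take_of_lt ht, List.getElem?_drop]
  · by_cases ht : t < P.length
    · rw [List.getElem?_take_of_lt ht, List.getElem?_drop, h t ht]
    · rw [List.getElem?_eq_none_iff.2 (by simp; omega), List.getElem?_eq_none_iff.2 (by omega)]

theorem AlmostOccursAt.getElem?_eq_getElem?_add {P S : List β} {j o₁ o₂ : ℕ}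
    (h₁ : AlmostOccursAt P S (j - o₁) o₁) (h₂ : AlmostOccursAt P S (j - o₂) o₂)
    (ho : o₁ < o₂) (hj : o₂ ≤ j) {t : ℕ} (ht : t + (o₂ - o₁) < P.length) (hto : t ≠ o₁) :
    P[t]? = P[t + (o₂ - o₁)]? := by
  rw [← h₁.2 t (by omega) hto, ← h₂.2 _ ht (by omega)]
  congr 1
  omega

theorem AlmostOccursAt.getElem?_eq_of_lt_of_lt {P S : List β} {j o₁ o₂ o₃ : ℕ}
    (h₁ : AlmostOccursAt P S (j - o₁) o₁) (h₂ : AlmostOccursAt P S (j - o₂) o₂)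
    (h₃ : AlmostOccursAt P S (j - o₃) o₃) (h₁₂ : o₁ < o₂) (h₂₃ : o₂ < o₃) (hj : o₃ ≤ j)
    (ho₃ : o₃ < P.length) : P[o₁]? = P[o₃]? := by
  rw [h₂.getElem?_eq_getElem?_add h₃ h₂₃ hj (t := o₁) (by omega) (by omega),
    h₁.getElem?_eq_getElem?_add h₂ h₁₂ (by omega) (by omega) (by omega)]
  congr 1
  omega

theorem Finset.card_image_le_two_of_eq_of_lt_of_lt [DecidableEq γ] {s : Finset ℕ} {f : ℕ → γ}
    (h : ∀ a ∈ s, ∀ b ∈ s, ∀ c ∈ s, a < b → b < c → f a = f c) : (s.image f).card ≤ 2 := by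
  by_contra! hs
  simp only [Finset.two_lt_card, Finset.mem_image] at hs
  obtain ⟨_, ⟨a, ha, rfl⟩, _, ⟨b, hb, rfl⟩, _, ⟨c, hc, rfl⟩, hab, hac, hbc⟩ := hs
  grind

theorem exists_mem_forall_almostOccursAt_ne (P T : List β) (j : ℕ) {s : Finset β}
    (hs : 3 ≤ s.card) : ∃ a ∈ s, ∀ o ≤ j, AlmostOccursAt P T (j - o) o → P[o]? ≠ some a := by
  set holes := (Finset.range P.length).filter fun o => o ≤ j ∧ AlmostOccursAt P T (j - o) o
  have hletters : (holes.image fun o => P[o]?).card ≤ 2 := by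
    refine Finset.card_image_le_two_of_eq_of_lt_of_lt fun a ha b hb c hc hab hbc => ?_
    simp only [holes, Finset.mem_filter, Finset.mem_range] at ha hb hc
    exact ha.2.2.getElem?_eq_of_lt_of_lt hb.2.2 hc.2.2 hab hbc hc.2.1 hc.1
  obtain ⟨_, hmem, hnot⟩ := Finset.exists_mem_notMem_of_card_lt_card
    (s := holes.image fun o => P[o]?) (t := s.map .some) (by rw [Finset.card_map]; omega)
  obtain ⟨a, ha, rfl⟩ := Finset.mem_map.1 hmem
  refine ⟨a, ha, fun o hoj ho hPo => hnot (Finset.mem_image.2 ⟨o, ?_, hPo⟩)⟩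
  have hoP : o < P.length := (List.getElem?_eq_some_iff.1 hPo).1
  simp [holes, hoP, hoj, ho]

theorem occ_set_subset {P T : List β} {j : ℕ} {a : β}
    (ha : ∀ o ≤ j, AlmostOccursAt P T (j - o) o → P[o]? ≠ some a) :
    occ P (T.set j a) ⊆ occ P T := by
  intro i hi
  simp only [occ, Finset.mem_filter, Finset.mem_range, occursAt_iff_getElem?,
    List.length_set] at hi ⊢
  obtain ⟨hiT, hiP, hocc⟩ := hi
  have hT : ∀ t < P.length, i + t ≠ j → T[i + t]? = P[t]? := fun t ht hne => by
    rw [← List.getElem?_set_ne (Ne.symm hne) (a := a)]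
    exact hocc t ht
  by_cases hj : i ≤ j ∧ j < i + P.length
  · refine absurd ?_ (ha (j - i) (by omega) ?_)
    · rw [← hocc _ (by omega), show i + (j - i) = j by omega, List.getElem?_set_self (by omega)]
    · rw [show j - (j - i) = i by omega]
      exact ⟨hiP, fun t ht hto => hT t ht (by omega)⟩
  · exact ⟨hiT, hiP, fun t ht => hT t ht (by omega)⟩

theorem hamming_set_le {S T : List β} {j : ℕ} (h : S[j]? ≠ T[j]?) (a : β) :
    hamming S (T.set j a) ≤ hamming S T := by
  simp only [hamming, ← List.countP_eq_length_filter]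
  refine List.countP_mono_left fun i _ => ?_
  simp only [decide_eq_true_eq]
  intro hi
  rcases eq_or_ne j i with rfl | hji
  · exact h
  · rwa [List.getElem?_set_ne hji] at hi

theorem hamming_map {f : β → γ} (hf : Injective f) (S T : List β) :
    hamming (S.map f) (T.map f) = hamming S T := by
  simp only [hamming, List.length_map, List.getElem?_map, (Option.map_injective hf).ne_iff]

theorem occ_map {f : β → γ} (hf : Injective f) (P S : List β) :
    occ (P.map f) (S.map f) = occ P S := by
  ext i
  rw [occ, occ, Finset.mem_filter, Finset.mem_filter]
  simp only [OccursAt, List.length_map, ← List.map_drop, ← List.map_take,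
    (List.map_injective_iff.2 hf).eq_iff]

end

theorem List.map_some_reduceOption {α : Type*} {X : List (Option α)} (h : none ∉ X) :
    X.reduceOption.map some = X := by
  induction X with
  | nil => rfl
  | cons x X ih => cases x <;> simp_all

theorem exists_hamming_le_occ_subset {α : Type*} [Fintype α] (hα : 3 ≤ Fintype.card α)
    (S P : List α) (X : List (Option α)) (hX : X.length = S.length) :
    ∃ S' : List α, S'.length = S.length ∧ hamming S S' ≤ hamming (S.map some) X ∧
      occ P S' ⊆ occ (P.map some) X := by
  induction hn : X.countP Option.isNone generalizing X with
  | zero =>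
    have hX' := List.map_some_reduceOption fun h => by simpa using List.countP_eq_zero.1 hn none h
    obtain ⟨S', rfl⟩ : ∃ S' : List α, X = S'.map some := ⟨_, hX'.symm⟩
    refine ⟨S', by simpa using hX, ?_, ?_⟩
    · rw [hamming_map (Option.some_injective α)]
    · rw [occ_map (Option.some_injective α)]
  | succ n ih =>
    obtain ⟨x, hx, hnone⟩ := List.countP_pos_iff (p := Option.isNone) (l := X).1 (by omega)
    obtain ⟨j, hj, rfl⟩ := List.getElem_of_mem hx
    rw [Option.isNone_iff_eq_none] at hnone
    obtain ⟨_, hc, hsafe⟩ := exists_mem_forall_almostOccursAt_ne (P.map some) X j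
      (s := Finset.univ.map .some) (by simpa using hα)
    obtain ⟨c, -, rfl⟩ := Finset.mem_map.1 hc
    obtain ⟨S', hS', hd, hocc⟩ := ih (X.set j (some c)) (by simpa using hX)
      (by simp [List.countP_set hj, hn, hnone])
    refine ⟨S', hS', hd.trans (hamming_set_le ?_ _), hocc.trans (occ_set_subset hsafe)⟩
    simp [List.getElem?_eq_getElem hj, hnone]

theorem stmt11_general {α : Type*} [Fintype α] (hcard : 4 ≤ Fintype.card α)
    (S P : List α) (τ k : ℕ) :
    (∀ S' : List α, S'.length = S.length → hamming S S' ≤ k →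
      τ ≤ (occ P S').card) ↔
    (∀ S'' : List (Option α), S''.length = S.length →
      hamming (S.map some) S'' ≤ k → τ ≤ (occ (P.map some) S'').card) := by
  constructor
  · intro h S'' hlen hdist
    obtain ⟨S', hS', hd, hocc⟩ := exists_hamming_le_occ_subset (by omega) S P S'' hlen
    exact (h S' hS' (hd.trans hdist)).trans (Finset.card_le_card hocc)
  · intro h S' hlen hdist
    have := h (S'.map some) (by simpa using hlen) (by rwa [hamming_map (Option.some_injective α)])
    rwa [occ_map (Option.some_injective α)] at this

theorem stmt11 {α : Type*} [Fintype α] (hcard : 4 ≤ Fintype.card α)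
    (S P : List α) (hsub : (occ P S).Nonempty) (τ k : ℕ)
    (hτ : 1 ≤ τ) (hτn : τ ≤ S.length) (hk : 1 ≤ k) (hkn : k ≤ S.length) :
    (∀ S' : List α, S'.length = S.length → hamming S S' ≤ k →
      τ ≤ (occ P S').card) ↔
    (∀ S'' : List (Option α), S''.length = S.length →
      hamming (S.map some) S'' ≤ k → τ ≤ (occ (P.map some) S'').card) :=
  stmt11_general hcard S P τ k
end

section
/- Let S be a string, P an aperiodic substring of S, and suppose some position of S is contained in occurrences of P starting at positions x and y with x < y. Then no third occurrence of P contains that position: the occurrences of P containing any fixed position of S number at most two. -/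
open Classical

/-! Two occurrences of `P` starting `d > 0` apart make `d` a period of `P`, so for aperiodic `P`
they start more than `|P|/2` apart. Three occurrences covering a common position start within a
window of length `< |P|`, yet their two consecutive gaps would add up to more than `|P|`. -/

lemma minPeriod_le_of_isPeriodOf {α : Type*} {P : List α} {p : ℕ} (h : IsPeriodOf P p) :
    minPeriod P ≤ p :=
  Nat.sInf_le h

namespace OccursAt

variable {α : Type*} {P S : List α} {a b c : ℕ}

lemma getElem?_eq (h : OccursAt P S a) {i : ℕ} (hi : i < P.length) : P[i]? = S[a + i]? := by
  rw [← h.2, List.getElem?_take_of_lt hi, List.getElem?_drop]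

lemma isPeriodOf_sub (ha : OccursAt P S a) (hb : OccursAt P S b) (hab : a < b) :
    IsPeriodOf P (b - a) := by
  refine ⟨Nat.sub_pos_of_lt hab, fun i hi => ?_⟩
  rw [ha.getElem?_eq hi, show a + (i + (b - a)) = b + i by omega, hb.getElem?_eq (by omega)]

lemma length_lt_two_mul_sub (hap : ¬ ListPeriodic P) (ha : OccursAt P S a)
    (hb : OccursAt P S b) (hab : a < b) : P.length < 2 * (b - a) := by
  have hmin := minPeriod_le_of_isPeriodOf (ha.isPeriodOf_sub hb hab)
  unfold ListPeriodic at hap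
  omega

lemma not_three_within_length (hap : ¬ ListPeriodic P) (ha : OccursAt P S a)
    (hb : OccursAt P S b) (hc : OccursAt P S c) (hab : a < b) (hbc : b < c)
    (hca : c < a + P.length) : False := by
  have gap_ab := length_lt_two_mul_sub hap ha hb hab
  have gap_bc := length_lt_two_mul_sub hap hb hc hbc
  omega

end OccursAt

theorem stmt13 {α : Type*} (S P : List α) (hap : ¬ ListPeriodic P)
    (x y q : ℕ) (hx : OccursAt P S x) (hy : OccursAt P S y) (hxy : x < y)
    (hqx : x ≤ q ∧ q < x + P.length) (hqy : y ≤ q ∧ q < y + P.length) :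
    ∀ z, OccursAt P S z → z ≤ q → q < z + P.length → z = x ∨ z = y := by
  intro z hz hzq hqz
  by_contra! hne
  rcases (by omega : z < x ∨ x < z ∧ z < y ∨ y < z) with hzx | ⟨hxz, hzy⟩ | hyz
  · exact hz.not_three_within_length hap hx hy hzx hxy (by omega)
  · exact hx.not_three_within_length hap hz hy hxz hzy (by omega)
  · exact hx.not_three_within_length hap hy hz hxy hyz (by omega)
end

section
/- Let S be a string, P a periodic substring of S, and k ≥ 0 an integer. If the occurrences of P in S belong to at least τ + 2k distinct runs of S with period per(P), then P is (τ,k)-resilient in S. -/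
open Classical

/-!
Two distinct runs with the same period `p` overlap in fewer than `p` positions: otherwise their
union would have period `p`, contradicting the maximality of one of them. Since a run of period
`p` has length at least `2p`, among three such runs through a common position two would overlap in
`p` positions, so each position lies in at most two of them; and a periodic occurrence of `P`
(length at least `2 per(P)`) lies in a unique run of period `per(P)`. The `k` substituted positions
therefore touch at most `2k` of the given runs, and each of the remaining `τ` runs keeps its own
occurrence of `P`.
-/

section Runs

variable {α : Type*}

theorem minPeriod_isPeriodOf (P : List α) : IsPeriodOf P (minPeriod P) :=
  Nat.sInf_mem (s := {p | IsPeriodOf P p}) ⟨P.length + 1, Nat.succ_pos _, fun _ _ => by omega⟩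

theorem minPeriod_pos (P : List α) : 0 < minPeriod P := (minPeriod_isPeriodOf P).1

theorem getElem?_frag (S : List α) (x y i : ℕ) (h : i < y - x + 1) :
    (frag S x y)[i]? = S[x + i]? := by
  rw [frag, List.getElem?_take_of_lt h, List.getElem?_drop]

theorem length_frag (S : List α) {x y : ℕ} (hxy : x ≤ y) (hy : y < S.length) :
    (frag S x y).length = y - x + 1 := by
  rw [frag, List.length_take, List.length_drop]
  omega

def HasPeriodOn (S : List α) (x y p : ℕ) : Prop :=
  ∀ j, x ≤ j → j + p ≤ y → S[j]? = S[j + p]?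

theorem HasPeriodOn.mono {S : List α} {x y x' y' p : ℕ} (h : HasPeriodOn S x y p)
    (hx : x ≤ x') (hy : y' ≤ y) : HasPeriodOn S x' y' p :=
  fun j hj hjp => h j (by omega) (by omega)

theorem HasPeriodOn.union {S : List α} {a₁ b₁ a₂ b₂ p : ℕ}
    (h₁ : HasPeriodOn S a₁ b₁ p) (h₂ : HasPeriodOn S a₂ b₂ p)
    (hov : max a₁ a₂ + p ≤ min b₁ b₂ + 1) :
    HasPeriodOn S (min a₁ a₂) (max b₁ b₂) p := by
  intro j hj hjp
  by_cases hM : max a₁ a₂ ≤ j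
  · by_cases hb : j + p ≤ b₁
    · exact h₁ j (by omega) hb
    · exact h₂ j (by omega) (by omega)
  · by_cases ha : a₁ ≤ a₂
    · exact h₁ j (by omega) (by omega)
    · exact h₂ j (by omega) (by omega)

theorem isPeriodOf_frag_iff (S : List α) {x y p : ℕ} (hxy : x ≤ y) (hy : y < S.length) :
    IsPeriodOf (frag S x y) p ↔ 0 < p ∧ HasPeriodOn S x y p := by
  rw [IsPeriodOf, length_frag S hxy hy]
  refine and_congr_right fun _ => ⟨fun h j hj hjp => ?_, fun h i hi => ?_⟩
  · have := h (j - x) (by omega)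
    rwa [getElem?_frag S x y _ (by omega), getElem?_frag S x y _ (by omega),
      Nat.add_sub_cancel' hj, ← Nat.add_assoc, Nat.add_sub_cancel' hj] at this
  · rw [getElem?_frag S x y _ (by omega), getElem?_frag S x y _ (by omega), ← Nat.add_assoc]
    exact h (x + i) (by omega) (by omega)

theorem IsRun.hasPeriodOn {S : List α} {x y : ℕ} (h : IsRun S x y) :
    HasPeriodOn S x y (minPeriod (frag S x y)) :=
  ((isPeriodOf_frag_iff S h.1 h.2.1).1 (minPeriod_isPeriodOf _)).2

theorem IsRun.not_hasPeriodOn_of_lt_left {S : List α} {x y c : ℕ} (h : IsRun S x y)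
    (hc : c < x) : ¬ HasPeriodOn S c y (minPeriod (frag S x y)) := fun hper =>
  h.2.2.2.1 (by omega) <| (isPeriodOf_frag_iff S (by have := h.1; omega) h.2.1).2
    ⟨minPeriod_pos _, hper.mono (by omega) le_rfl⟩

theorem IsRun.not_hasPeriodOn_of_lt_right {S : List α} {x y c : ℕ} (h : IsRun S x y)
    (hc : y < c) (hcS : c < S.length) : ¬ HasPeriodOn S x c (minPeriod (frag S x y)) :=
  fun hper => h.2.2.2.2 (by omega) <| (isPeriodOf_frag_iff S (by have := h.1; omega) (by omega)).2
    ⟨minPeriod_pos _, hper.mono le_rfl (by omega)⟩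

theorem IsRun.eq_of_overlap {S : List α} {a₁ b₁ a₂ b₂ p : ℕ}
    (h₁ : IsRun S a₁ b₁) (h₂ : IsRun S a₂ b₂)
    (hp₁ : minPeriod (frag S a₁ b₁) = p) (hp₂ : minPeriod (frag S a₂ b₂) = p)
    (hov : max a₁ a₂ + p ≤ min b₁ b₂ + 1) : (a₁, b₁) = (a₂, b₂) := by
  have hunion := (hp₁ ▸ h₁.hasPeriodOn).union (hp₂ ▸ h₂.hasPeriodOn) hov
  have hlen : max b₁ b₂ < S.length := max_lt h₁.2.1 h₂.2.1
  have ha : a₁ = a₂ := by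
    rcases Nat.lt_trichotomy a₁ a₂ with h | h | h
    · exact (h₂.not_hasPeriodOn_of_lt_left h (hp₂ ▸ hunion.mono (by omega) (by omega))).elim
    · exact h
    · exact (h₁.not_hasPeriodOn_of_lt_left h (hp₁ ▸ hunion.mono (by omega) (by omega))).elim
  have hb : b₁ = b₂ := by
    rcases Nat.lt_trichotomy b₁ b₂ with h | h | h
    · exact (h₁.not_hasPeriodOn_of_lt_right h h₂.2.1
        (hp₁ ▸ hunion.mono (by omega) (by omega))).elim
    · exact h
    · exact (h₂.not_hasPeriodOn_of_lt_right h h₁.2.1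
        (hp₂ ▸ hunion.mono (by omega) (by omega))).elim
  rw [ha, hb]

theorem card_filter_runs_mem_le_two {S : List α} {p : ℕ} {R : Finset (ℕ × ℕ)}
    (hR : ∀ r ∈ R, IsRun S r.1 r.2 ∧ minPeriod (frag S r.1 r.2) = p) (d : ℕ) :
    (R.filter fun r => r.1 ≤ d ∧ d ≤ r.2).card ≤ 2 := by
  by_contra! h
  obtain ⟨r₁, r₂, r₃, hr₁, hr₂, hr₃, h₁₂, h₁₃, h₂₃⟩ := Finset.two_lt_card_iff.1 h
  simp only [Finset.mem_filter] at hr₁ hr₂ hr₃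
  have eq_of_overlap {r r' : ℕ × ℕ} (hr : r ∈ R) (hr' : r' ∈ R)
      (hov : max r.1 r'.1 + p ≤ min r.2 r'.2 + 1) : r = r' :=
    (hR r hr).1.eq_of_overlap (hR r' hr').1 (hR r hr).2 (hR r' hr').2 hov
  -- a run through `d` of length `≥ 2p` contains the `p` positions up to `d` or those from `d`;
  -- two of the three runs make the same choice and then overlap in `p` positions
  have side {r : ℕ × ℕ} (hr : r ∈ R ∧ r.1 ≤ d ∧ d ≤ r.2) : r.1 + p ≤ d ∨ d + p ≤ r.2 := by
    have := (hR r hr.1).2 ▸ (hR r hr.1).1.2.2.1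
    omega
  rcases side hr₁ with c₁ | c₁ <;> rcases side hr₂ with c₂ | c₂ <;>
    rcases side hr₃ with c₃ | c₃ <;>
    first
      | exact h₁₂ (eq_of_overlap hr₁.1 hr₂.1 (by omega))
      | exact h₁₃ (eq_of_overlap hr₁.1 hr₃.1 (by omega))
      | exact h₂₃ (eq_of_overlap hr₂.1 hr₃.1 (by omega))

theorem card_filter_runs_hit_le {S : List α} {p : ℕ} {R : Finset (ℕ × ℕ)}
    (hR : ∀ r ∈ R, IsRun S r.1 r.2 ∧ minPeriod (frag S r.1 r.2) = p) (D : Finset ℕ) :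
    (R.filter fun r => ∃ d ∈ D, r.1 ≤ d ∧ d ≤ r.2).card ≤ 2 * D.card := by
  calc (R.filter fun r => ∃ d ∈ D, r.1 ≤ d ∧ d ≤ r.2).card
      ≤ (D.biUnion fun d => R.filter fun r => r.1 ≤ d ∧ d ≤ r.2).card := by
        refine Finset.card_le_card fun r hr => ?_
        obtain ⟨hrR, d, hd, hrd⟩ := Finset.mem_filter.1 hr
        exact Finset.mem_biUnion.2 ⟨d, hd, Finset.mem_filter.2 ⟨hrR, hrd⟩⟩
    _ ≤ D.card * 2 := Finset.card_biUnion_le_card_mul _ _ _ fun d _ =>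
        card_filter_runs_mem_le_two hR d
    _ = 2 * D.card := mul_comm _ _

end Runs

section Substitutions

variable {α : Type*}

noncomputable def mismatches (S S' : List α) : Finset ℕ :=
  ((List.range S.length).filter fun i => S[i]? ≠ S'[i]?).toFinset

theorem card_mismatches_le (S S' : List α) : (mismatches S S').card ≤ hamming S S' :=
  List.toFinset_card_le _

theorem getElem?_eq_of_notMem_mismatches {S S' : List α} (hlen : S'.length = S.length) {j : ℕ}
    (hj : j ∉ mismatches S S') : S[j]? = S'[j]? := by
  by_cases hjS : j < S.length
  · by_contra hne
    exact hj <| List.mem_toFinset.2 <|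
      List.mem_filter.2 ⟨List.mem_range.2 hjS, by simpa using hne⟩
  · rw [List.getElem?_eq_none_iff.2 (by omega), List.getElem?_eq_none_iff.2 (by omega)]

theorem OccursAt.of_getElem?_eq {P S S' : List α} {i : ℕ} (hocc : OccursAt P S i)
    (hlen : S'.length = S.length)
    (hagree : ∀ j, i ≤ j → j < i + P.length → S[j]? = S'[j]?) : OccursAt P S' i := by
  refine ⟨hlen ▸ hocc.1, Eq.trans (List.ext_getElem? fun n => ?_) hocc.2⟩
  by_cases hn : n < P.length
  · rw [List.getElem?_take_of_lt hn, List.getElem?_take_of_lt hn, List.getElem?_drop,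
      List.getElem?_drop]
    exact (hagree (i + n) (by omega) (by omega)).symm
  · rw [List.getElem?_eq_none_iff.2 (by simp only [List.length_take, List.length_drop]; omega),
      List.getElem?_eq_none_iff.2 (by simp only [List.length_take, List.length_drop]; omega)]

theorem mem_occ_of_occursAt {P S : List α} {i : ℕ} (h : OccursAt P S i) : i ∈ occ P S :=
  Finset.mem_filter.2 ⟨Finset.mem_range.2 (by have := h.1; omega), h⟩

end Substitutions

theorem stmt14 {α : Type*} (S P : List α) (hper : ListPeriodic P) (τ k : ℕ)
    (R : Finset (ℕ × ℕ)) (hcard : τ + 2 * k ≤ R.card)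
    (hruns : ∀ r ∈ R, IsRun S r.1 r.2 ∧ minPeriod (frag S r.1 r.2) = minPeriod P ∧
      ∃ i, OccursAt P S i ∧ r.1 ≤ i ∧ i + P.length ≤ r.2 + 1) :
    Resilient P S τ k := by
  intro S' hlen hham
  choose! f hf using fun r hr => (hruns r hr).2.2
  set D := mismatches S S'
  have hhit := card_filter_runs_hit_le (fun r hr => ⟨(hruns r hr).1, (hruns r hr).2.1⟩) D
  have hD : D.card ≤ k := (card_mismatches_le S S').trans hham
  have huntouched : τ ≤ (R.filter fun r => ¬ ∃ d ∈ D, r.1 ≤ d ∧ d ≤ r.2).card := by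
    have := R.card_filter_add_card_filter_not fun r => ∃ d ∈ D, r.1 ≤ d ∧ d ≤ r.2
    omega
  refine huntouched.trans <|
    Finset.card_le_card_of_injOn f (fun r hr => ?_) fun r hr r' hr' hf' => ?_
  · obtain ⟨hrR, hfree⟩ := Finset.mem_filter.1 hr
    obtain ⟨hocc, hx, hy⟩ := hf r hrR
    exact mem_occ_of_occursAt <| hocc.of_getElem?_eq hlen fun j hj hjP =>
      getElem?_eq_of_notMem_mismatches hlen fun hjD => hfree ⟨j, hjD, by omega, by omega⟩
  · have hrR := (Finset.mem_filter.1 hr).1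
    have hrR' := (Finset.mem_filter.1 hr').1
    obtain ⟨-, hx, hy⟩ := hf r hrR
    obtain ⟨-, hx', hy'⟩ := hf r' hrR'
    have hP : 2 * minPeriod P ≤ P.length := hper
    -- both runs contain the occurrence at `f r = f r'`, which is longer than their period
    simpa using (hruns r hrR).1.eq_of_overlap (hruns r' hrR').1 (hruns r hrR).2.1
      (hruns r' hrR').2.1 (by omega)
end
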